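/- Let W be a weak equivalence set on a finite lattice P. Then AF(W), the set of transfer systems occurring as acyclic fibrations of model structures with weak equivalences W, is exactly the interval [AF_min, AF_max] = { T ∈ Tr(P) : AF_min ⊆ T ⊆ AF_max } in the lattice of transfer systems, where AF_min is the intersection of all elements of AF(W) and AF_max is their join. -/

import Mathlib

variable {P : Type*}

section Defs
variable [Lattice P]

/-- A wide subcategory of the poset category of `P`: contains all identities,
refines `≤`, and is closed under composition. -/
def IsWide (R : P → P → Prop) : Prop :=
  (∀ x, R x x) ∧ (∀ x y, R x y → x ≤ y) ∧ (∀ x y z, R x y → R y z → R x z)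

/-- A decomposable subcategory: if a composite is in `R`, so are both factors. -/
def IsDecomposable (R : P → P → Prop) : Prop :=
  ∀ x y z : P, x ≤ y → y ≤ z → R x z → R x y ∧ R y z

/-- A transfer system: a partial order refining `≤`, closed under restriction
(pullback) along meets. -/
def IsTransferSystem (R : P → P → Prop) : Prop :=
  (∀ x, R x x) ∧ (∀ x y z, R x y → R y z → R x z) ∧
  (∀ x y, R x y → R y x → x = y) ∧
  (∀ x y, R x y → x ≤ y) ∧
  (∀ x y z, R x y → z ≤ y → R (x ⊓ z) z)

/-- A cotransfer system: a partial order refining `≤`, closed under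
cobase change (pushout) along joins. -/
def IsCotransferSystem (R : P → P → Prop) : Prop :=
  (∀ x, R x x) ∧ (∀ x y z, R x y → R y z → R x z) ∧
  (∀ x y, R x y → R y x → x = y) ∧
  (∀ x y, R x y → x ≤ y) ∧
  (∀ x y z, R x y → x ≤ z → R z (y ⊔ z))

/-- Closed under pullbacks: the pullback of `b → d` along `c → d` is `b ⊓ c → c`. -/
def PullbackClosed (R : P → P → Prop) : Prop :=
  ∀ b c d : P, R b d → c ≤ d → R (b ⊓ c) c

/-- Closed under pushouts: the pushout of `a → b` along `a → c` is `c → b ⊔ c`. -/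
def PushoutClosed (R : P → P → Prop) : Prop :=
  ∀ a b c : P, R a b → a ≤ c → R c (b ⊔ c)

/-- The left lifting class of a class `S` of morphisms of the poset category:
pairs `(a,b)` with `a ≤ b` having the left lifting property against every
member of `S`. -/
def LLP (S : P → P → Prop) (a b : P) : Prop :=
  a ≤ b ∧ ∀ x y, S x y → a ≤ x → b ≤ y → b ≤ x

/-- The right lifting class of a class `S` of morphisms of the poset category. -/
def RLP (S : P → P → Prop) (x y : P) : Prop :=
  x ≤ y ∧ ∀ a b, S a b → a ≤ x → b ≤ y → b ≤ x

/-- A weak factorization system `(L, R)`: every morphism factors as a map in `L`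
followed by a map in `R`, and `L = ᵇR`, `R = Lᵇ`. -/
def IsWFS (L R : P → P → Prop) : Prop :=
  (∀ x y : P, x ≤ y → ∃ z, L x z ∧ R z y) ∧
  (∀ a b, L a b ↔ LLP R a b) ∧
  (∀ x y, R x y ↔ RLP L x y)

/-- The composite class `S ∘ T` (first `T`, then `S`). -/
def Comp (S T : P → P → Prop) (x z : P) : Prop :=
  ∃ y, T x y ∧ S y z

/-- The two-out-of-three property for a class of morphisms. -/
def TwoOutOfThree (W : P → P → Prop) : Prop :=
  ∀ x y z : P, x ≤ y → y ≤ z →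
    ((W x y → W y z → W x z) ∧ (W x y → W x z → W y z) ∧ (W y z → W x z → W x y))

/-- A model structure on the poset category of `P`, given by acyclic
cofibrations, fibrations, cofibrations and acyclic fibrations: two weak
factorization systems `(AC, F)` and `(C, AF)` with `AC ⊆ C`, such that
`W := AF ∘ AC` satisfies two-out-of-three. -/
def IsModel (AC F C AF : P → P → Prop) : Prop :=
  IsWFS AC F ∧ IsWFS C AF ∧ (∀ x y, AC x y → C x y) ∧
  TwoOutOfThree (Comp AF AC)

/-- `T` occurs as the class of acyclic fibrations of a model structure whose
class of weak equivalences is `W`. -/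
def OccursAsAF (W T : P → P → Prop) : Prop :=
  ∃ AC F C, IsModel AC F C T ∧ ∀ x y, Comp T AC x y ↔ W x y

end Defs

/-!
Given a transfer system `T` with `AF_min ⊆ T ⊆ AF_max`, take `T` as acyclic fibrations, `ᵇT` as
cofibrations and `ᵇT ∩ W` as acyclic cofibrations. On a finite lattice every transfer system is
the right class and every cotransfer system the left class of a weak factorization system, so,
once `T ⊆ W` is known, the only thing to check is that `ᵇT ∩ W` is closed under pushouts.
The bound `T ⊆ AF_max` gives `T ⊆ W`, because the transfer system generated by `AF(W)` lies in
`W`. Starting from the source of a map `a → b` in `ᵇT ∩ W`, extend a chain of acyclic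
cofibrations of the various model structures with weak equivalences `W` as far as possible
inside `b`: the remaining map `y → b` then lies in every element of `AF(W)`, hence in `T`, and
lifting `a → b` against it forces `y = b`. Pushouts of such chains stay in `W`.
-/

open Relation (ReflTransGen reflTransGen_le_of_le)

section Lattice
variable [Lattice P] {L R S : P → P → Prop} {a b c x y : P}

lemma llp_refl (S : P → P → Prop) (x : P) : LLP S x x :=
  ⟨le_rfl, fun _ _ _ hxu _ => hxu⟩

lemma rlp_refl (S : P → P → Prop) (x : P) : RLP S x x :=
  ⟨le_rfl, fun _ _ _ _ hbx => hbx⟩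

lemma LLP.trans (hab : LLP S a b) (hbc : LLP S b c) : LLP S a c :=
  ⟨hab.1.trans hbc.1, fun u v huv hau hcv =>
    hbc.2 u v huv (hab.2 u v huv hau (hbc.1.trans hcv)) hcv⟩

lemma LLP.pushout (hab : LLP S a b) (hac : a ≤ c) : LLP S c (b ⊔ c) :=
  ⟨le_sup_right, fun u v huv hcu hv =>
    sup_le (hab.2 u v huv (hac.trans hcu) (le_sup_left.trans hv)) hcu⟩

lemma RLP.pullback (hxy : RLP S x y) (hcy : c ≤ y) : RLP S (x ⊓ c) c :=
  ⟨inf_le_right, fun a b hab ha hb =>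
    le_inf (hxy.2 a b hab (ha.trans inf_le_left) (hb.trans hcy)) hb⟩

namespace IsWFS
variable (h : IsWFS L R)
include h

lemma left_refl (x : P) : L x x := (h.2.1 x x).2 (llp_refl R x)

lemma right_refl (x : P) : R x x := (h.2.2 x x).2 (rlp_refl L x)

lemma le_of_left (hxy : L x y) : x ≤ y := ((h.2.1 x y).1 hxy).1

lemma le_of_right (hxy : R x y) : x ≤ y := ((h.2.2 x y).1 hxy).1

lemma pushoutClosed : PushoutClosed L :=
  fun a b _ hab hac => (h.2.1 _ _).2 (((h.2.1 a b).1 hab).pushout hac)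

lemma pullbackClosed : PullbackClosed R :=
  fun b _ d hbd hcd => (h.2.2 _ _).2 (((h.2.2 b d).1 hbd).pullback hcd)

end IsWFS

lemma PushoutClosed.reflTransGen (hR : PushoutClosed R) (hle : ∀ x y, R x y → x ≤ y) :
    PushoutClosed (ReflTransGen R) := by
  intro a b c hab hac
  induction hab with
  | refl => rw [sup_eq_right.mpr hac]
  | @tail m b _ hmb ih =>
    have hpush := hR m b (m ⊔ c) hmb le_sup_left
    rw [← sup_assoc, sup_eq_left.mpr (hle m b hmb)] at hpush
    exact ih.tail hpush

lemma PullbackClosed.reflTransGen (hR : PullbackClosed R) (hle : ∀ x y, R x y → x ≤ y) :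
    PullbackClosed (ReflTransGen R) := by
  intro b c d hbd hcd
  induction hbd using ReflTransGen.head_induction_on generalizing c with
  | refl => rw [inf_eq_right.mpr hcd]
  | @head b m hbm _ ih =>
    have hpull := hR b (m ⊓ c) m hbm inf_le_left
    rw [← inf_assoc, inf_eq_left.mpr (hle b m hbm)] at hpull
    exact ReflTransGen.head hpull (ih c hcd)

end Lattice

lemma InfClosed.exists_isLeast {α : Type*} [SemilatticeInf α] [Finite α] {s : Set α}
    (hs : InfClosed s) (hne : s.Nonempty) : ∃ m, IsLeast s m := by
  obtain ⟨m, hm⟩ := s.toFinite.exists_minimal hne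
  exact ⟨m, hm.prop, fun a ha => (hm.le_of_le (hs hm.prop ha) inf_le_left).trans inf_le_right⟩

lemma SupClosed.exists_isGreatest {α : Type*} [SemilatticeSup α] [Finite α] {s : Set α}
    (hs : SupClosed s) (hne : s.Nonempty) : ∃ m, IsGreatest s m := by
  obtain ⟨m, hm⟩ := s.toFinite.exists_maximal hne
  exact ⟨m, hm.prop, fun a ha => le_sup_right.trans (hm.le_of_ge (hs hm.prop ha) le_sup_left)⟩

section FiniteLattice
variable [Lattice P] [Finite P] {L T : P → P → Prop} {x z : P}

theorem IsTransferSystem.exists_factorization (hT : IsTransferSystem T) (hxz : x ≤ z) :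
    ∃ y, LLP T x y ∧ T y z := by
  obtain ⟨hrefl, htrans, -, hle, hpb⟩ := hT
  have hM : InfClosed {m | x ≤ m ∧ T m z} := fun m hm n hn =>
    ⟨le_inf hm.1 hn.1, htrans _ _ _ (hpb m z n hm.2 (hle n z hn.2)) hn.2⟩
  obtain ⟨y, ⟨hxy, hyz⟩, hy⟩ := hM.exists_isLeast ⟨z, hxz, hrefl z⟩
  exact ⟨y, ⟨hxy, fun u v huv hxu hyv =>
    (hy ⟨le_inf hxu hxy, htrans _ _ _ (hpb u v y huv hyv) hyz⟩).trans inf_le_left⟩, hyz⟩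

theorem IsTransferSystem.isWFS (hT : IsTransferSystem T) : IsWFS (LLP T) T := by
  refine ⟨fun x z => hT.exists_factorization, fun _ _ => Iff.rfl, fun x y =>
    ⟨fun hxy => ⟨hT.2.2.2.1 x y hxy, fun a b hab hax hby => hab.2 x y hxy hax hby⟩,
      fun hxy => ?_⟩⟩
  obtain ⟨m, hxm, hmy⟩ := hT.exists_factorization hxy.1
  rwa [le_antisymm hxm.1 (hxy.2 x m hxm le_rfl (hT.2.2.2.1 m y hmy))]

theorem IsCotransferSystem.exists_factorization (hL : IsCotransferSystem L) (hxz : x ≤ z) :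
    ∃ y, L x y ∧ RLP L y z := by
  obtain ⟨hrefl, htrans, -, hle, hpo⟩ := hL
  have hM : SupClosed {m | L x m ∧ m ≤ z} := fun m hm n hn =>
    ⟨htrans _ _ _ hn.1 (hpo x m n hm.1 (hle x n hn.1)), sup_le hm.2 hn.2⟩
  obtain ⟨y, ⟨hxy, hyz⟩, hy⟩ := hM.exists_isGreatest ⟨x, hrefl x, hxz⟩
  exact ⟨y, hxy, hyz, fun a b hab hay hbz =>
    le_sup_left.trans (hy ⟨htrans _ _ _ hxy (hpo a b y hab hay), sup_le hbz hyz⟩)⟩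

theorem IsCotransferSystem.isWFS (hL : IsCotransferSystem L) : IsWFS L (RLP L) := by
  refine ⟨fun x z => hL.exists_factorization, fun a b =>
    ⟨fun hab => ⟨hL.2.2.2.1 a b hab, fun x y hxy hax hby => hxy.2 a b hab hax hby⟩,
      fun hab => ?_⟩, fun _ _ => Iff.rfl⟩
  obtain ⟨m, ham, hmb⟩ := hL.exists_factorization hab.1
  rwa [← le_antisymm hmb.1 (hab.2 m b hmb (hL.2.2.2.1 a m ham) le_rfl)]

end FiniteLattice

namespace IsModel
variable [Lattice P] {AC F C AF : P → P → Prop} {u v x y : P} (h : IsModel AC F C AF)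
include h

lemma comp_of_ac (hxy : AC x y) : Comp AF AC x y := ⟨y, hxy, h.2.1.right_refl y⟩

lemma comp_of_af (hxy : AF x y) : Comp AF AC x y := ⟨x, h.1.left_refl x, hxy⟩

lemma isWide : IsWide (Comp AF AC) := by
  have hle : ∀ x y, Comp AF AC x y → x ≤ y := fun x y ⟨m, hxm, hmy⟩ =>
    (h.1.le_of_left hxm).trans (h.2.1.le_of_right hmy)
  exact ⟨fun x => h.comp_of_ac (h.1.left_refl x), hle, fun x y z hxy hyz =>
    (h.2.2.2 x y z (hle x y hxy) (hle y z hyz)).1 hxy hyz⟩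

lemma isDecomposable : IsDecomposable (Comp AF AC) := by
  intro x y z hxy hyz ⟨m, hxm, hmz⟩
  have hmyz : m ⊔ y ≤ z := sup_le (h.2.1.le_of_right hmz) hyz
  -- `y → m ⊔ y` is a pushout of `x → m`, and `m → m ⊔ y` a pullback of `m → z`
  have hym : AC y (m ⊔ y) := h.1.pushoutClosed x m y hxm hxy
  have hmm : AF m (m ⊔ y) := by simpa using h.2.1.pullbackClosed m (m ⊔ y) z hmz hmyz
  have hmyz' : Comp AF AC (m ⊔ y) z :=
    (h.2.2.2 m (m ⊔ y) z le_sup_left hmyz).2.1 (h.comp_of_af hmm) (h.comp_of_af hmz)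
  have hyz' : Comp AF AC y z := h.isWide.2.2 _ _ _ (h.comp_of_ac hym) hmyz'
  exact ⟨(h.2.2.2 x y z hxy hyz).2.2 hyz' ⟨m, hxm, hmz⟩, hyz'⟩

lemma ac_of_llp_of_comp (hL : LLP AF u v) (hw : Comp AF AC u v) : AC u v := by
  obtain ⟨m, hum, hmv⟩ := hw
  rwa [← le_antisymm (h.2.1.le_of_right hmv) (hL.2 m v hmv (h.1.le_of_left hum) le_rfl)]

end IsModel

namespace OccursAsAF
variable [Lattice P] {W T : P → P → Prop} {u v c x z : P} (h : OccursAsAF W T)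
include h

lemma exists_model : ∃ AC F C, IsModel AC F C T ∧ Comp T AC = W :=
  let ⟨AC, F, C, hM, hW⟩ := h
  ⟨AC, F, C, hM, funext₂ fun x y => propext (hW x y)⟩

lemma isWide : IsWide W := by
  obtain ⟨AC, F, C, hM, rfl⟩ := h.exists_model
  exact hM.isWide

lemma isDecomposable : IsDecomposable W := by
  obtain ⟨AC, F, C, hM, rfl⟩ := h.exists_model
  exact hM.isDecomposable

lemma twoOutOfThree : TwoOutOfThree W := by
  obtain ⟨AC, F, C, hM, rfl⟩ := h.exists_model
  exact hM.2.2.2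

lemma le_weq : T ≤ W := by
  obtain ⟨AC, F, C, hM, rfl⟩ := h.exists_model
  exact fun x y => hM.comp_of_af

lemma le (hxz : T x z) : x ≤ z := by
  obtain ⟨AC, F, C, hM, -⟩ := h.exists_model
  exact hM.2.1.le_of_right hxz

lemma pullbackClosed : PullbackClosed T := by
  obtain ⟨AC, F, C, hM, -⟩ := h.exists_model
  exact hM.2.1.pullbackClosed

lemma exists_factorization (hxz : x ≤ z) : ∃ y, LLP T x y ∧ T y z := by
  obtain ⟨AC, F, C, hM, -⟩ := h.exists_model
  obtain ⟨y, hxy, hyz⟩ := hM.2.1.1 x z hxz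
  exact ⟨y, (hM.2.1.2.1 x y).1 hxy, hyz⟩

lemma weq_pushout (hL : LLP T u v) (hw : W u v) (huc : u ≤ c) : W c (v ⊔ c) := by
  obtain ⟨AC, F, C, hM, rfl⟩ := h.exists_model
  exact hM.comp_of_ac (hM.1.pushoutClosed u v c (hM.ac_of_llp_of_comp hL hw) huc)

end OccursAsAF

section WeakEquivalences
variable [Lattice P] {R T W : P → P → Prop} {a b : P}

lemma IsWide.reflTransGen_le (hW : IsWide W) (hR : R ≤ W) : ReflTransGen R ≤ W :=
  have : Std.Refl W := ⟨hW.1⟩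
  have : IsTrans P W := ⟨hW.2.2⟩
  reflTransGen_le_of_le hR

def AFUnion (W : P → P → Prop) (u v : P) : Prop :=
  ∃ S, OccursAsAF W S ∧ S u v

/-- By `IsModel.ac_of_llp_of_comp`, the union of the acyclic cofibration classes of the model
structures with weak equivalences `W`. -/
def ACUnion (W : P → P → Prop) (u v : P) : Prop :=
  W u v ∧ ∃ S, OccursAsAF W S ∧ LLP S u v

lemma afUnion_le_weq : AFUnion W ≤ W := fun _ _ ⟨_, hS, huv⟩ => hS.le_weq _ _ huv

lemma acUnion_le_weq : ACUnion W ≤ W := fun _ _ h => h.1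

theorem isTransferSystem_reflTransGen_afUnion : IsTransferSystem (ReflTransGen (AFUnion W)) := by
  have hle : ∀ x y, AFUnion W x y → x ≤ y := fun _ _ ⟨_, hS, hxy⟩ => hS.le hxy
  have hle' : ∀ x y, ReflTransGen (AFUnion W) x y → x ≤ y := reflTransGen_le_of_le hle
  have hpb : PullbackClosed (AFUnion W) := fun b c d ⟨S, hS, hbd⟩ hcd =>
    ⟨S, hS, hS.pullbackClosed b c d hbd hcd⟩
  exact ⟨fun _ => .refl, fun _ _ _ => .trans, fun x y hxy hyx => (hle' x y hxy).antisymm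
    (hle' y x hyx), hle', fun x y z hxy hzy => hpb.reflTransGen hle x z y hxy hzy⟩

lemma pushoutClosed_acUnion : PushoutClosed (ACUnion W) :=
  fun _ _ _ ⟨hw, S, hS, hL⟩ huc => ⟨hS.weq_pushout hL hw huc, S, hS, hL.pushout huc⟩

theorem exists_reflTransGen_acUnion_forall_occursAsAF [Finite P] (hW : IsWide W)
    (hWd : IsDecomposable W) (hab : W a b) :
    ∃ y, ReflTransGen (ACUnion W) a y ∧ ∀ S, OccursAsAF W S → S y b := by
  obtain ⟨y, hy⟩ := {m | ReflTransGen (ACUnion W) a m ∧ m ≤ b}.toFinite.exists_maximal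
    ⟨a, .refl, hW.2.1 a b hab⟩
  obtain ⟨hay, hyb⟩ := hy.prop
  refine ⟨y, hay, fun S hS => ?_⟩
  obtain ⟨u, hyu, hub⟩ := hS.exists_factorization hyb
  have hWyb : W y b :=
    (hWd a y b (hW.2.1 a y (hW.reflTransGen_le acUnion_le_weq a y hay)) hyb hab).2
  have hWyu : W y u := (hWd y u b hyu.1 (hS.le hub) hWyb).1
  have huy : u ≤ y := hy.le_of_ge ⟨hay.tail ⟨hWyu, S, hS, hyu⟩, hS.le hub⟩ hyu.1
  rwa [le_antisymm hyu.1 huy]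

theorem reflTransGen_acUnion_of_llp [Finite P] (hW : IsWide W) (hWd : IsDecomposable W)
    (hT : ∀ x y, T x y → x ≤ y) (hmin : ∀ x y, (∀ S, OccursAsAF W S → S x y) → T x y)
    (hL : LLP T a b) (hab : W a b) : ReflTransGen (ACUnion W) a b := by
  obtain ⟨y, hay, hyb⟩ := exists_reflTransGen_acUnion_forall_occursAsAF hW hWd hab
  have hTyb := hmin y b hyb
  have hay' : a ≤ y := hW.2.1 a y (hW.reflTransGen_le acUnion_le_weq a y hay)
  rwa [le_antisymm (hT y b hTyb) (hL.2 y b hTyb hay' le_rfl)] at hay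

theorem pushoutClosed_llp_inf [Finite P] (hW : IsWide W) (hWd : IsDecomposable W)
    (hT : ∀ x y, T x y → x ≤ y) (hmin : ∀ x y, (∀ S, OccursAsAF W S → S x y) → T x y) :
    PushoutClosed (LLP T ⊓ W) := by
  intro a b c ⟨hL, hab⟩ hac
  refine ⟨hL.pushout hac, hW.reflTransGen_le acUnion_le_weq _ _ ?_⟩
  exact pushoutClosed_acUnion.reflTransGen (fun x y h => hW.2.1 x y h.1) a b c
    (reflTransGen_acUnion_of_llp hW hWd hT hmin hL hab) hac

theorem isCotransferSystem_llp_inf (hW : IsWide W) (hpush : PushoutClosed (LLP T ⊓ W)) :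
    IsCotransferSystem (LLP T ⊓ W) :=
  ⟨fun x => ⟨llp_refl T x, hW.1 x⟩,
    fun x y z hxy hyz => ⟨hxy.1.trans hyz.1, hW.2.2 x y z hxy.2 hyz.2⟩,
    fun _ _ hxy hyx => hxy.1.1.antisymm hyx.1.1, fun _ _ hxy => hxy.1.1, hpush⟩

theorem comp_llp_inf_eq [Finite P] (hW : IsWide W) (hWd : IsDecomposable W)
    (hT : IsTransferSystem T) (hTW : T ≤ W) : Comp T (LLP T ⊓ W) = W := by
  funext x z
  refine propext ⟨fun ⟨y, ⟨_, hxy⟩, hyz⟩ => hW.2.2 x y z hxy (hTW y z hyz), fun hxz => ?_⟩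
  obtain ⟨y, hxy, hyz⟩ := hT.exists_factorization (hW.2.1 x z hxz)
  exact ⟨y, ⟨hxy, (hWd x y z hxy.1 (hT.2.2.2.1 y z hyz) hxz).1⟩, hyz⟩

theorem occursAsAF_of_pushoutClosed [Finite P] (hW : IsWide W) (hWd : IsDecomposable W)
    (h23 : TwoOutOfThree W) (hT : IsTransferSystem T) (hTW : T ≤ W)
    (hpush : PushoutClosed (LLP T ⊓ W)) : OccursAsAF W T := by
  have hComp := comp_llp_inf_eq hW hWd hT hTW
  exact ⟨LLP T ⊓ W, _, LLP T, ⟨(isCotransferSystem_llp_inf hW hpush).isWFS, hT.isWFS,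
    fun _ _ => And.left, by rwa [hComp]⟩, fun x y => by rw [hComp]⟩

end WeakEquivalences

theorem afW_eq_interval_general [Lattice P] [Fintype P]
    (W AFmax : P → P → Prop)
    (hne : ∃ T : P → P → Prop, OccursAsAF W T)
    -- `AFmax` is the join of all elements of `AF(W)`: an upper bound …
    (hub : ∀ T : P → P → Prop, OccursAsAF W T → ∀ x y, T x y → AFmax x y)
    -- … and the least such among transfer systems.
    (hlub : ∀ T' : P → P → Prop, IsTransferSystem T' →
      (∀ T : P → P → Prop, OccursAsAF W T → ∀ x y, T x y → T' x y) →
      ∀ x y, AFmax x y → T' x y) :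
    ∀ T : P → P → Prop, IsTransferSystem T →
      (OccursAsAF W T ↔
        ((∀ x y, (∀ S : P → P → Prop, OccursAsAF W S → S x y) → T x y) ∧
          (∀ x y, T x y → AFmax x y))) := by
  intro T hT
  refine ⟨fun hT' => ⟨fun x y h => h T hT', hub T hT'⟩, fun ⟨hmin, hmax⟩ => ?_⟩
  obtain ⟨S, hS⟩ := hne
  have hTW : T ≤ W := fun x y hxy => hS.isWide.reflTransGen_le afUnion_le_weq x y
    (hlub _ isTransferSystem_reflTransGen_afUnion
      (fun S hS u v huv => .single ⟨S, hS, huv⟩) x y (hmax x y hxy))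
  exact occursAsAF_of_pushoutClosed hS.isWide hS.isDecomposable hS.twoOutOfThree hT hTW
    (pushoutClosed_llp_inf hS.isWide hS.isDecomposable hT.2.2.2.1 hmin)

/-- For a weak equivalence set `W`, `AF(W)` is exactly the interval
`[AF_min, AF_max]` in the lattice of transfer systems, where `AF_min` is the
intersection of all elements of `AF(W)` and `AF_max` is their join. -/
theorem afW_eq_interval [Lattice P] [Fintype P]
    (W AFmax : P → P → Prop)
    (hne : ∃ T : P → P → Prop, OccursAsAF W T)
    (hmaxTS : IsTransferSystem AFmax)
    -- `AFmax` is the join of all elements of `AF(W)`: an upper bound …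
    (hub : ∀ T : P → P → Prop, OccursAsAF W T → ∀ x y, T x y → AFmax x y)
    -- … and the least such among transfer systems.
    (hlub : ∀ T' : P → P → Prop, IsTransferSystem T' →
      (∀ T : P → P → Prop, OccursAsAF W T → ∀ x y, T x y → T' x y) →
      ∀ x y, AFmax x y → T' x y) :
    ∀ T : P → P → Prop, IsTransferSystem T →
      (OccursAsAF W T ↔
        ((∀ x y, (∀ S : P → P → Prop, OccursAsAF W S → S x y) → T x y) ∧
          (∀ x y, T x y → AFmax x y))) :=
  afW_eq_interval_general W AFmax hne hub hlub
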